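/- arXiv:2106.12324 — 2 statements merged into one kernel-verified Lean document; each statement's English description precedes it below -/
import Mathlib

section
/- If y solves y' = ω(x,y) with ω(x,y) = β(x,y)/(p + r·β(x,y)), then for any ε, δ ∈ ℝ the translated function ŷ(x̂) := y(x̂ − δrε) + δε solves the same ODE: ŷ'(x̂) = ω(x̂, ŷ(x̂)). -/
theorem translated_solution_solves_ode
    (b c p r δ ε : ℝ)
    (β ω : ℝ → ℝ → ℝ)
    (hβ : ∀ x y, β x y = ((b - c) * Real.exp (-b * (x - y * r)) + c) * Real.exp (c * (x - y * r)))
    (hω : ∀ x y, ω x y = β x y / (p + r * β x y))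
    (hne : ∀ x y, p + r * β x y ≠ 0)
    (y : ℝ → ℝ) (hy : Differentiable ℝ y)
    (hsol : ∀ x, deriv y x = ω x (y x)) :
    ∀ xh, deriv (fun xh => y (xh - δ * r * ε) + δ * ε) xh
      = ω xh (y (xh - δ * r * ε) + δ * ε) := by
  intro xh
  have hβeq : β (xh - δ * r * ε) (y (xh - δ * r * ε))
      = β xh (y (xh - δ * r * ε) + δ * ε) := by
    rw [hβ, hβ]; ring_nf
  have hd : deriv (fun xh => y (xh - δ * r * ε) + δ * ε) xh
      = deriv y (xh - δ * r * ε) := by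
    rw [deriv_add_const]
    exact deriv_comp_sub_const y _ _
  rw [hd, hsol, hω, hω, hβeq]
end

section
/- Under the linearized symmetry condition η_x + (η_y − ξ_x)ω − ξ_y·ω² = ξ·ω_x + η·ω_y with the ansatz ξ = α (constant), η = Γ·y + γ (Γ, γ constants), and ω(x,y) = β(x,y)/(p + r·β(x,y)) for the Schottky β, one must have Γ = 0 and α = r·γ, provided b ≠ c, b,c > 0, p > 0, r > 0. -/
/-!
`ω` is a travelling wave `f (x - y * r)` with `f = g / (p + r * g)`, `g` the Schottky profile.
At the point `(u + y * r, y)` the symmetry condition collapses to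
`Γ * f u = (α - r * (Γ * y + γ)) * f' u`, an affine identity in the free variable `y`; once
`f' u ≠ 0`, comparing `y = 0` and `y = 1` forces `Γ = 0` and then `α = r * γ`. Such a `u ≥ 0`
exists: `f' = p * g' / (p + r * g) ^ 2`, `g > 0` on `[0, ∞)`, and
`g' u = (c ^ 2 - (b - c) ^ 2 * exp (-b * u)) * exp (c * u)` cannot vanish at both `u = 0` and `u = 1`.
-/

open Real

theorem HasDerivAt.div_const_add_mul_self {g : ℝ → ℝ} {g' p r u : ℝ} (hg : HasDerivAt g g' u)
    (hden : p + r * g u ≠ 0) :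
    HasDerivAt (fun v => g v / (p + r * g v)) (p * g' / (p + r * g u) ^ 2) u := by
  refine (hg.div ((hg.const_mul r).const_add p) hden).congr_deriv ?_
  ring

noncomputable def schottky (b c u : ℝ) : ℝ := ((b - c) * exp (-b * u) + c) * exp (c * u)

theorem hasDerivAt_schottky (b c u : ℝ) :
    HasDerivAt (schottky b c) ((c ^ 2 - (b - c) ^ 2 * exp (-b * u)) * exp (c * u)) u := by
  refine ((((hasDerivAt_id' u).const_mul (-b)).exp.const_mul (b - c)).add_const c).mul
    ((hasDerivAt_id' u).const_mul c).exp |>.congr_deriv ?_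
  ring

theorem schottky_pos {b c u : ℝ} (hb : 0 < b) (hc : 0 < c) (hu : 0 ≤ u) : 0 < schottky b c u := by
  have he : exp (-b * u) ≤ 1 := exp_le_one_iff.mpr (by nlinarith)
  have hconvex : (b - c) * exp (-b * u) + c = b * exp (-b * u) + c * (1 - exp (-b * u)) := by ring
  unfold schottky
  rw [hconvex]
  have hpos := exp_pos (-b * u)
  have hcompl : 0 ≤ 1 - exp (-b * u) := sub_nonneg.mpr he
  positivity

theorem exists_nonneg_schottky_deriv_factor_ne_zero {b c : ℝ} (hb : 0 < b) (hc : 0 < c) :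
    ∃ u, 0 ≤ u ∧ c ^ 2 - (b - c) ^ 2 * exp (-b * u) ≠ 0 := by
  by_cases h : (b - c) ^ 2 = c ^ 2
  · refine ⟨1, zero_le_one, ?_⟩
    have : exp (-b * 1) < 1 := exp_lt_one_iff.mpr (by linarith)
    rw [h]
    nlinarith [pow_pos hc 2]
  · exact ⟨0, le_rfl, by simpa [sub_eq_zero, eq_comm] using h⟩

def LinearizedSymmetryCondition (ξ η ω : ℝ → ℝ → ℝ) : Prop :=
  ∀ x y,
    deriv (fun t => η t y) x
      + (deriv (fun t => η x t) y - deriv (fun t => ξ t y) x) * ω x y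
      - deriv (fun t => ξ x t) y * (ω x y) ^ 2
    = ξ x y * deriv (fun t => ω t y) x + η x y * deriv (fun t => ω x t) y

-- The condition evaluated at `(u + y * r, y)`, where `∂ω/∂y = -r * ∂ω/∂x`.
theorem LinearizedSymmetryCondition.travelingWave {f : ℝ → ℝ} {f' r α Γ γ u : ℝ}
    {ξ η ω : ℝ → ℝ → ℝ} (hξ : ∀ x y, ξ x y = α) (hη : ∀ x y, η x y = Γ * y + γ)
    (hω : ∀ x y, ω x y = f (x - y * r)) (hf : HasDerivAt f f' u)
    (h : LinearizedSymmetryCondition ξ η ω) (y : ℝ) :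
    Γ * f u = (α - r * (Γ * y + γ)) * f' := by
  have hu : u + y * r - y * r = u := by ring
  have hfu : HasDerivAt f f' (u + y * r - y * r) := by rwa [hu]
  have hωx : HasDerivAt (fun t => f (t - y * r)) f' (u + y * r) :=
    hfu.comp_sub_const _ _
  have hωy : HasDerivAt (fun t => f (u + y * r - t * r)) (-r * f') y := by
    have := hfu.scomp y (((hasDerivAt_id' y).mul_const r).const_sub (u + y * r))
    simpa [Function.comp_def, mul_comm] using this
  have H := h (u + y * r) y
  simp only [hξ, hη, hω, hu, deriv_const, deriv_add_const', deriv_const_mul_id', hωx.deriv,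
    hωy.deriv, sub_zero, zero_add, zero_mul] at H
  linear_combination H

theorem eq_zero_and_eq_of_forall_mul_eq {A D r α Γ γ : ℝ} (hr : r ≠ 0) (hD : D ≠ 0)
    (h : ∀ y, Γ * A = (α - r * (Γ * y + γ)) * D) : Γ = 0 ∧ α = r * γ := by
  have hΓ : Γ = 0 := by
    have : r * D * Γ = 0 := by linear_combination h 1 - h 0
    simpa [hr, hD] using this
  refine ⟨hΓ, ?_⟩
  have : (α - r * γ) * D = 0 := by linear_combination -(h 0) + A * hΓ
  have := (mul_eq_zero.mp this).resolve_right hD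
  linarith

theorem lsc_forces_translation_ansatz1_general
    (b c p r : ℝ) (hb : 0 < b) (hc : 0 < c) (hp : 0 < p) (hr : 0 < r)
    (β ω : ℝ → ℝ → ℝ)
    (hβ : ∀ x y, β x y = ((b - c) * Real.exp (-b * (x - y * r)) + c) * Real.exp (c * (x - y * r)))
    (hω : ∀ x y, ω x y = β x y / (p + r * β x y))
    (α Γ γ : ℝ)
    (ξ η : ℝ → ℝ → ℝ)
    (hξ : ∀ x y, ξ x y = α)
    (hη : ∀ x y, η x y = Γ * y + γ)
    (hlsc : ∀ x y,
      deriv (fun t => η t y) x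
        + (deriv (fun t => η x t) y - deriv (fun t => ξ t y) x) * ω x y
        - deriv (fun t => ξ x t) y * (ω x y) ^ 2
      = ξ x y * deriv (fun t => ω t y) x + η x y * deriv (fun t => ω x t) y) :
    Γ = 0 ∧ α = r * γ := by
  obtain ⟨u, hu, hfactor⟩ := exists_nonneg_schottky_deriv_factor_ne_zero hb hc
  have hden : p + r * schottky b c u ≠ 0 := by
    have := schottky_pos hb hc hu
    positivity
  have hwave : ∀ x y, ω x y = schottky b c (x - y * r) / (p + r * schottky b c (x - y * r)) :=
    fun x y => by rw [hω, hβ, schottky]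
  have hprofile := (hasDerivAt_schottky b c u).div_const_add_mul_self hden
  refine eq_zero_and_eq_of_forall_mul_eq hr.ne' ?_
    (LinearizedSymmetryCondition.travelingWave hξ hη hwave hprofile hlsc)
  exact div_ne_zero (mul_ne_zero hp.ne' (mul_ne_zero hfactor (exp_pos _).ne')) (pow_ne_zero _ hden)

theorem lsc_forces_translation_ansatz1
    (b c p r : ℝ) (hb : 0 < b) (hc : 0 < c) (hbc : b ≠ c) (hp : 0 < p) (hr : 0 < r)
    (β ω : ℝ → ℝ → ℝ)
    (hβ : ∀ x y, β x y = ((b - c) * Real.exp (-b * (x - y * r)) + c) * Real.exp (c * (x - y * r)))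
    (hω : ∀ x y, ω x y = β x y / (p + r * β x y))
    (α Γ γ : ℝ) (hnz : (α, Γ, γ) ≠ (0, 0, 0))
    (ξ η : ℝ → ℝ → ℝ)
    (hξ : ∀ x y, ξ x y = α)
    (hη : ∀ x y, η x y = Γ * y + γ)
    (hlsc : ∀ x y,
      deriv (fun t => η t y) x
        + (deriv (fun t => η x t) y - deriv (fun t => ξ t y) x) * ω x y
        - deriv (fun t => ξ x t) y * (ω x y) ^ 2
      = ξ x y * deriv (fun t => ω t y) x + η x y * deriv (fun t => ω x t) y) :
    Γ = 0 ∧ α = r * γ :=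
  lsc_forces_translation_ansatz1_general b c p r hb hc hp hr β ω hβ hω α Γ γ ξ η hξ hη hlsc
end
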